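/- arXiv:2604.25952 — 4 statements merged into one kernel-verified Lean document; each statement's English description precedes it below -/
import Mathlib

section
/- In 4×n Chomp, the positions (2,1,0,0), (2,2,1,0), and (2,2,2,1) are all P-positions. -/
/-- A legal move in `m`-row Chomp from row-length vector `r` to `s`:
pick a remaining square `(i, j)` (with `1 ≤ j ≤ r i`), other than the
poisoned square (row index `0`, column `1`); every row `k ≥ i` of
length `≥ j` is truncated to length `j - 1`. -/
def ChompMove {m : ℕ} (r s : Fin m → ℕ) : Prop :=
  ∃ (i : Fin m) (j : ℕ), 1 ≤ j ∧ j ≤ r i ∧ ¬(i.val = 0 ∧ j = 1) ∧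
    ∀ k, s k = if i ≤ k ∧ j ≤ r k then j - 1 else r k

/-- Every move strictly decreases the number of remaining squares. -/
theorem ChompMove.sum_lt {m : ℕ} {r s : Fin m → ℕ} (h : ChompMove r s) :
    ∑ k, s k < ∑ k, r k := by
  obtain ⟨i, j, h1, hj, -, hs⟩ := h
  have key : ∀ k, s k ≤ r k := by
    intro k
    rw [hs k]
    by_cases hc : i ≤ k ∧ j ≤ r k
    · rw [if_pos hc]; omega
    · rw [if_neg hc]
  have ki : s i < r i := by
    rw [hs i, if_pos ⟨le_refl i, hj⟩]; omega
  exact Finset.sum_lt_sum (fun k _ => key k) ⟨i, Finset.mem_univ i, ki⟩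

/-- P-positions (the player to move loses): a position is a P-position
iff every legal move leads to a non-P (i.e. N) position.  The terminal
position `(1,0,…,0)` has no legal move, so it is a P-position vacuously
(the player forced to move there must take the poison and loses). -/
def ChompP {m : ℕ} (r : Fin m → ℕ) : Prop :=
  ∀ s, ChompMove r s → ¬ ChompP s
termination_by ∑ k, r k
decreasing_by exact ChompMove.sum_lt ‹ChompMove r s›

/-- N-positions: some move leads to a P-position. -/
def ChompN {m : ℕ} (r : Fin m → ℕ) : Prop :=
  ∃ s, ChompMove r s ∧ ChompP s

lemma notP_of_move {m : ℕ} {s p : Fin m → ℕ} (h : ChompMove s p) (hp : ChompP p) :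
    ¬ ChompP s := by
  intro hs; rw [ChompP] at hs; exact hs p h hp

lemma eq_vec_of_move {s : Fin 4 → ℕ} {v : Fin 4 → ℕ} (h : ∀ k, s k = v k) : s = v :=
  funext h

lemma P1000 : ChompP ![1,0,0,0] := by
  rw [ChompP]
  rintro s ⟨i, j, h1, hj, hne, hs⟩
  fin_cases i <;> simp_all <;> omega

lemma P2100 : ChompP ![2,1,0,0] := by
  rw [ChompP]
  rintro s ⟨i, j, h1, hj, hne, hs⟩
  fin_cases i <;> norm_num at hj hne ⊢
  · have hj2 : j = 2 := by omega
    subst hj2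
    have : s = ![1,1,0,0] :=
      eq_vec_of_move fun k => by fin_cases k <;> (rw [hs]; decide)
    subst this
    exact notP_of_move ⟨1, 1, by decide⟩ P1000
  · have hj1 : j = 1 := by omega
    subst hj1
    have : s = ![2,0,0,0] :=
      eq_vec_of_move fun k => by fin_cases k <;> (rw [hs]; decide)
    subst this
    exact notP_of_move ⟨0, 2, by decide⟩ P1000
  · omega
  · omega

lemma P2210 : ChompP ![2,2,1,0] := by
  rw [ChompP]
  rintro s ⟨i, j, h1, hj, hne, hs⟩
  fin_cases i <;> norm_num at hj hne ⊢
  · have hj2 : j = 2 := by omega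
    subst hj2
    have : s = ![1,1,1,0] :=
      eq_vec_of_move fun k => by fin_cases k <;> (rw [hs]; decide)
    subst this
    exact notP_of_move ⟨1, 1, by decide⟩ P1000
  · interval_cases j
    · have : s = ![2,0,0,0] :=
        eq_vec_of_move fun k => by fin_cases k <;> (rw [hs]; decide)
      subst this
      exact notP_of_move ⟨0, 2, by decide⟩ P1000
    · have : s = ![2,1,1,0] :=
        eq_vec_of_move fun k => by fin_cases k <;> (rw [hs]; decide)
      subst this
      exact notP_of_move ⟨2, 1, by decide⟩ P2100
  · have hj1 : j = 1 := by omega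
    subst hj1
    have : s = ![2,2,0,0] :=
      eq_vec_of_move fun k => by fin_cases k <;> (rw [hs]; decide)
    subst this
    exact notP_of_move ⟨1, 2, by decide⟩ P2100
  · omega

lemma P2221 : ChompP ![2,2,2,1] := by
  rw [ChompP]
  rintro s ⟨i, j, h1, hj, hne, hs⟩
  fin_cases i <;> norm_num at hj hne ⊢
  · have hj2 : j = 2 := by omega
    subst hj2
    have : s = ![1,1,1,1] :=
      eq_vec_of_move fun k => by fin_cases k <;> (rw [hs]; decide)
    subst this
    exact notP_of_move ⟨1, 1, by decide⟩ P1000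
  · interval_cases j
    · have : s = ![2,0,0,0] :=
        eq_vec_of_move fun k => by fin_cases k <;> (rw [hs]; decide)
      subst this
      exact notP_of_move ⟨0, 2, by decide⟩ P1000
    · have : s = ![2,1,1,1] :=
        eq_vec_of_move fun k => by fin_cases k <;> (rw [hs]; decide)
      subst this
      exact notP_of_move ⟨2, 1, by decide⟩ P2100
  · interval_cases j
    · have : s = ![2,2,0,0] :=
        eq_vec_of_move fun k => by fin_cases k <;> (rw [hs]; decide)
      subst this
      exact notP_of_move ⟨1, 2, by decide⟩ P2100
    · have : s = ![2,2,1,1] :=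
        eq_vec_of_move fun k => by fin_cases k <;> (rw [hs]; decide)
      subst this
      exact notP_of_move ⟨3, 1, by decide⟩ P2210
  · have hj1 : j = 1 := by omega
    subst hj1
    have : s = ![2,2,2,0] :=
      eq_vec_of_move fun k => by fin_cases k <;> (rw [hs]; decide)
    subst this
    exact notP_of_move ⟨2, 2, by decide⟩ P2210

/-- In 4×n Chomp, the positions (2,1,0,0), (2,2,1,0) and (2,2,2,1) are
P-positions. -/
theorem P_positions_a2 :
    ChompP ![2, 1, 0, 0] ∧ ChompP ![2, 2, 1, 0] ∧ ChompP ![2, 2, 2, 1] := by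
  exact ⟨P2100, P2210, P2221⟩
end

section
/- In 4×n Chomp, the positions (3,1,1,0), (3,2,0,0), and (3,3,1,1) are P-positions. -/
def moveFn {m : ℕ} (r : Fin m → ℕ) (i : Fin m) (j : ℕ) : Fin m → ℕ :=
  fun k => if i ≤ k ∧ j ≤ r k then j - 1 else r k

lemma chompMove_iff {m : ℕ} (r s : Fin m → ℕ) :
    ChompMove r s ↔ ∃ (i : Fin m) (j : ℕ), 1 ≤ j ∧ j ≤ r i ∧ ¬(i.val = 0 ∧ j = 1) ∧
      s = moveFn r i j := by
  constructor
  · rintro ⟨i, j, h1, h2, h3, h4⟩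
    exact ⟨i, j, h1, h2, h3, funext h4⟩
  · rintro ⟨i, j, h1, h2, h3, rfl⟩
    exact ⟨i, j, h1, h2, h3, fun k => rfl⟩

lemma chompP_iff {m : ℕ} (r : Fin m → ℕ) :
    ChompP r ↔ ∀ (i : Fin m), ∀ j ∈ Finset.Icc 1 (r i), ¬(i.val = 0 ∧ j = 1) →
      ¬ ChompP (moveFn r i j) := by
  rw [ChompP]
  constructor
  · intro h i j hj hne
    simp only [Finset.mem_Icc] at hj
    exact h _ ((chompMove_iff r _).2 ⟨i, j, hj.1, hj.2, hne, rfl⟩)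
  · intro h s hs
    obtain ⟨i, j, h1, h2, h3, rfl⟩ := (chompMove_iff r s).1 hs
    exact h i j (Finset.mem_Icc.2 ⟨h1, h2⟩) h3

def chompPB : ℕ → {m : ℕ} → (Fin m → ℕ) → Bool
  | 0, _, _ => true
  | n+1, m, r => (List.finRange m).all fun i => (List.range' 1 (r i)).all fun j =>
      (decide (i.val = 0 ∧ j = 1)) || !(chompPB n (moveFn r i j))

lemma chompPB_correct : ∀ (n : ℕ) {m : ℕ} (r : Fin m → ℕ), (∑ k, r k) < n →
    (chompPB n r = true ↔ ChompP r) := by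
  intro n
  induction n with
  | zero => intro m r h; omega
  | succ n ih =>
    intro m r h
    rw [chompPB, chompP_iff]
    simp only [List.all_eq_true, List.mem_finRange, List.mem_range'_1, Bool.or_eq_true,
      decide_eq_true_iff, Bool.not_eq_true', true_implies, Finset.mem_Icc]
    have key : ∀ (i : Fin m) (j : ℕ), 1 ≤ j → j ≤ r i → ¬(i.val = 0 ∧ j = 1) →
        (chompPB n (moveFn r i j) = false ↔ ¬ ChompP (moveFn r i j)) := by
      intro i j h1 h2 hne
      have hmv : ChompMove r (moveFn r i j) :=
        (chompMove_iff r _).2 ⟨i, j, h1, h2, hne, rfl⟩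
      have hlt : (∑ k, moveFn r i j k) < n := by
        have := ChompMove.sum_lt hmv
        omega
      rw [← ih _ hlt]
      cases chompPB n (moveFn r i j) <;> simp
    constructor
    · intro H i j hj hne
      exact (key i j hj.1 hj.2 hne).1 (by
        rcases H i j ⟨hj.1, by omega⟩ with hc | hb
        · exact absurd hc hne
        · exact hb)
    · intro H i j hj
      by_cases hne : i.val = 0 ∧ j = 1
      · exact Or.inl hne
      · exact Or.inr ((key i j hj.1 (by omega) hne).2 (H i j ⟨hj.1, by omega⟩ hne))

/-- In 4×n Chomp, the positions (3,1,1,0), (3,2,0,0) and (3,3,1,1) are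
P-positions. -/
theorem P_positions_a3 :
    ChompP ![3, 1, 1, 0] ∧ ChompP ![3, 2, 0, 0] ∧ ChompP ![3, 3, 1, 1] := by
  refine ⟨?_, ?_, ?_⟩
  · rw [← chompPB_correct 6 ![3,1,1,0] (by decide)]; decide
  · rw [← chompPB_correct 6 ![3,2,0,0] (by decide)]; decide
  · rw [← chompPB_correct 9 ![3,3,1,1] (by decide)]; decide
end

section
/- In 4×n Chomp, the positions (4,1,1,1), (4,2,2,0), and (4,3,0,0) are P-positions. -/
def mvChomp {m : ℕ} (r : Fin m → ℕ) (i : Fin m) (j : ℕ) : Fin m → ℕ :=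
  fun k => if i ≤ k ∧ j ≤ r k then j - 1 else r k

theorem ChompP_iff {m : ℕ} (r : Fin m → ℕ) :
    ChompP r ↔ ∀ (i : Fin m) (j : ℕ), 1 ≤ j → j ≤ r i → ¬(i.val = 0 ∧ j = 1) →
      ¬ ChompP (mvChomp r i j) := by
  rw [ChompP]
  constructor
  · intro h i j h1 h2 h3
    exact h _ ⟨i, j, h1, h2, h3, fun k => rfl⟩
  · rintro h s ⟨i, j, h1, h2, h3, hs⟩
    have : s = mvChomp r i j := funext hs
    rw [this]
    exact h i j h1 h2 h3

def chompPb {m : ℕ} : ℕ → (Fin m → ℕ) → Bool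
  | 0, _ => true
  | fuel + 1, r =>
    (List.finRange m).all fun i =>
      (List.range (r i + 1)).all fun j =>
        if 1 ≤ j ∧ j ≤ r i ∧ ¬(i.val = 0 ∧ j = 1) then
          !(chompPb fuel (mvChomp r i j))
        else true

theorem chompPb_succ_iff {m fuel : ℕ} (r : Fin m → ℕ) :
    chompPb (fuel + 1) r = true ↔
      ∀ (i : Fin m) (j : ℕ), 1 ≤ j → j ≤ r i → ¬(i.val = 0 ∧ j = 1) →
        chompPb fuel (mvChomp r i j) = false := by
  simp only [chompPb, List.all_eq_true, List.mem_finRange, List.mem_range, true_implies]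
  constructor
  · intro h i j h1 h2 h3
    have := h i j (by omega)
    rw [if_pos ⟨h1, h2, h3⟩] at this
    simpa using this
  · intro h i j hj
    by_cases hc : 1 ≤ j ∧ j ≤ r i ∧ ¬(i.val = 0 ∧ j = 1)
    · rw [if_pos hc]
      simpa using h i j hc.1 hc.2.1 hc.2.2
    · rw [if_neg hc]

theorem chompPb_iff {m : ℕ} :
    ∀ (fuel : ℕ) (r : Fin m → ℕ), ∑ k, r k ≤ fuel → (chompPb fuel r = true ↔ ChompP r) := by
  intro fuel
  induction fuel with
  | zero =>
    intro r hr
    have hz : ∀ k, r k = 0 := by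
      intro k
      have := Finset.single_le_sum (f := r) (fun k _ => Nat.zero_le _) (Finset.mem_univ k)
      omega
    simp only [chompPb, true_iff]
    rw [ChompP_iff]
    intro i j h1 h2
    rw [hz i] at h2
    omega
  | succ fuel ih =>
    intro r hr
    rw [ChompP_iff, chompPb_succ_iff]
    constructor
    · intro h i j h1 h2 h3
      have hlt : ∑ k, mvChomp r i j k < ∑ k, r k :=
        ChompMove.sum_lt ⟨i, j, h1, h2, h3, fun k => rfl⟩
      have hb := h i j h1 h2 h3
      rw [← ih (mvChomp r i j) (by omega)]
      simp [hb]
    · intro h i j h1 h2 h3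
      have hlt : ∑ k, mvChomp r i j k < ∑ k, r k :=
        ChompMove.sum_lt ⟨i, j, h1, h2, h3, fun k => rfl⟩
      have := h i j h1 h2 h3
      rw [← ih (mvChomp r i j) (by omega)] at this
      exact Bool.eq_false_iff.mpr (by simpa using this)

/-- In 4×n Chomp, the positions (4,1,1,1), (4,2,2,0) and (4,3,0,0) are
P-positions. -/
theorem P_positions_a4 :
    ChompP ![4, 1, 1, 1] ∧ ChompP ![4, 2, 2, 0] ∧ ChompP ![4, 3, 0, 0] := by
  refine ⟨?_, ?_, ?_⟩ <;>
    [exact (chompPb_iff 8 _ (by simp [Fin.sum_univ_four])).mp (by decide);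
     exact (chompPb_iff 8 _ (by simp [Fin.sum_univ_four])).mp (by decide);
     exact (chompPb_iff 8 _ (by simp [Fin.sum_univ_four])).mp (by decide)]
end

section
/- In 4×n Chomp, for a ∈ {1,2,3,4}, the Unique Extension property holds: for every triple (a,b,c) with a ≥ b ≥ c ≥ 0, there is at most one d with c ≥ d ≥ 0 such that (a,b,c,d) is a P-position. -/
namespace ChompAux

theorem chompP_iff {m : ℕ} (r : Fin m → ℕ) :
    ChompP r ↔ ∀ s, ChompMove r s → ¬ ChompP s := by
  rw [ChompP]

lemma mval0 (w x y z : ℕ) (h : 0 < 4) : (![w,x,y,z] : Fin 4 → ℕ) ⟨0,h⟩ = w := rfl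
lemma mval1 (w x y z : ℕ) (h : 1 < 4) : (![w,x,y,z] : Fin 4 → ℕ) ⟨1,h⟩ = x := rfl
lemma mval2 (w x y z : ℕ) (h : 2 < 4) : (![w,x,y,z] : Fin 4 → ℕ) ⟨2,h⟩ = y := rfl
lemma mval3 (w x y z : ℕ) (h : 3 < 4) : (![w,x,y,z] : Fin 4 → ℕ) ⟨3,h⟩ = z := rfl

/-- Explicit characterization of the moves from a 4-row position. -/
theorem chompMove_iff (a b c d : ℕ) (s : Fin 4 → ℕ) :
    ChompMove ![a,b,c,d] s ↔
      (∃ t, t < d ∧ s = ![a,b,c,t]) ∨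
      (∃ t, t < c ∧ s = ![a,b,t,min d t]) ∨
      (∃ t, t < b ∧ s = ![a,t,min c t,min d t]) ∨
      (∃ t, 1 ≤ t ∧ t < a ∧ s = ![t,min b t,min c t,min d t]) := by
  constructor
  · rintro ⟨⟨iv, hiv⟩, j, h1, hj, hpois, hs⟩
    simp only [] at hpois
    interval_cases iv
    · simp only [mval0] at hj
      refine Or.inr (Or.inr (Or.inr ⟨j - 1, by omega, by omega, ?_⟩))
      funext k; rcases k with ⟨kv, hkv⟩; interval_cases kv <;>
        [rw [hs ⟨0, hkv⟩]; rw [hs ⟨1, hkv⟩]; rw [hs ⟨2, hkv⟩]; rw [hs ⟨3, hkv⟩]] <;>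
        simp only [mval0, mval1, mval2, mval3, Fin.mk_le_mk] <;>
        split_ifs <;> omega
    · simp only [mval1] at hj
      refine Or.inr (Or.inr (Or.inl ⟨j - 1, by omega, ?_⟩))
      funext k; rcases k with ⟨kv, hkv⟩; interval_cases kv <;>
        [rw [hs ⟨0, hkv⟩]; rw [hs ⟨1, hkv⟩]; rw [hs ⟨2, hkv⟩]; rw [hs ⟨3, hkv⟩]] <;>
        simp only [mval0, mval1, mval2, mval3, Fin.mk_le_mk] <;>
        split_ifs <;> omega
    · simp only [mval2] at hj
      refine Or.inr (Or.inl ⟨j - 1, by omega, ?_⟩)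
      funext k; rcases k with ⟨kv, hkv⟩; interval_cases kv <;>
        [rw [hs ⟨0, hkv⟩]; rw [hs ⟨1, hkv⟩]; rw [hs ⟨2, hkv⟩]; rw [hs ⟨3, hkv⟩]] <;>
        simp only [mval0, mval1, mval2, mval3, Fin.mk_le_mk] <;>
        split_ifs <;> omega
    · simp only [mval3] at hj
      refine Or.inl ⟨j - 1, by omega, ?_⟩
      funext k; rcases k with ⟨kv, hkv⟩; interval_cases kv <;>
        [rw [hs ⟨0, hkv⟩]; rw [hs ⟨1, hkv⟩]; rw [hs ⟨2, hkv⟩]; rw [hs ⟨3, hkv⟩]] <;>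
        simp only [mval0, mval1, mval2, mval3, Fin.mk_le_mk] <;>
        split_ifs <;> omega
  · rintro (⟨t, ht, rfl⟩ | ⟨t, ht, rfl⟩ | ⟨t, ht, rfl⟩ | ⟨t, ht1, ht, rfl⟩)
    · refine ⟨⟨3, by omega⟩, t + 1, by omega, by simp only [mval3]; omega,
        by rintro ⟨h, -⟩; simp at h, ?_⟩
      intro k; rcases k with ⟨kv, hkv⟩; interval_cases kv <;>
        simp only [mval0, mval1, mval2, mval3, Fin.mk_le_mk] <;>
        split_ifs <;> omega
    · refine ⟨⟨2, by omega⟩, t + 1, by omega, by simp only [mval2]; omega,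
        by rintro ⟨h, -⟩; simp at h, ?_⟩
      intro k; rcases k with ⟨kv, hkv⟩; interval_cases kv <;>
        simp only [mval0, mval1, mval2, mval3, Fin.mk_le_mk] <;>
        split_ifs <;> omega
    · refine ⟨⟨1, by omega⟩, t + 1, by omega, by simp only [mval1]; omega,
        by rintro ⟨h, -⟩; simp at h, ?_⟩
      intro k; rcases k with ⟨kv, hkv⟩; interval_cases kv <;>
        simp only [mval0, mval1, mval2, mval3, Fin.mk_le_mk] <;>
        split_ifs <;> omega
    · refine ⟨⟨0, by omega⟩, t + 1, by omega, by simp only [mval0]; omega,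
        by rintro ⟨-, h⟩; omega, ?_⟩
      intro k; rcases k with ⟨kv, hkv⟩; interval_cases kv <;>
        simp only [mval0, mval1, mval2, mval3, Fin.mk_le_mk] <;>
        split_ifs <;> omega

/-- Precomputed table of the P-positions of 4-row Chomp with `a ≤ 4`. -/
def tbl : ℕ → ℕ → ℕ → ℕ → Bool
  | 1, 0, 0, 0 => true
  | 2, 1, 0, 0 => true
  | 2, 2, 1, 0 => true
  | 2, 2, 2, 1 => true
  | 3, 1, 1, 0 => true
  | 3, 2, 0, 0 => true
  | 3, 3, 1, 1 => true
  | 4, 1, 1, 1 => true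
  | 4, 2, 2, 0 => true
  | 4, 3, 0, 0 => true
  | _, _, _, _ => false

theorem tbl_correct : ∀ n a b c d, a + b + c + d < n → 1 ≤ a → a ≤ 4 → b ≤ a →
    c ≤ b → d ≤ c → (ChompP ![a, b, c, d] ↔ tbl a b c d = true) := by
  intro n
  induction n with
  | zero => intro a b c d h; omega
  | succ n ih =>
    intro a b c d hlt h1a ha4 hba hcb hdc
    rw [chompP_iff]
    have key : (∀ s, ChompMove ![a,b,c,d] s → ¬ ChompP s) ↔
        ((∀ t, t < d → tbl a b c t = false) ∧
         (∀ t, t < c → tbl a b t (min d t) = false) ∧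
         (∀ t, t < b → tbl a t (min c t) (min d t) = false) ∧
         (∀ t, t < a → 1 ≤ t → tbl t (min b t) (min c t) (min d t) = false)) := by
      constructor
      · intro h
        refine ⟨fun t ht => ?_, fun t ht => ?_, fun t ht => ?_, fun t ht ht1 => ?_⟩
        · exact Bool.eq_false_iff.2 fun htbl => h _
            ((chompMove_iff a b c d _).2 (Or.inl ⟨t, ht, rfl⟩))
            ((ih a b c t (by omega) h1a ha4 hba hcb (by omega)).2 htbl)
        · exact Bool.eq_false_iff.2 fun htbl => h _
            ((chompMove_iff a b c d _).2 (Or.inr (Or.inl ⟨t, ht, rfl⟩)))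
            ((ih a b t (min d t) (by omega) h1a ha4 hba (by omega) (by omega)).2 htbl)
        · exact Bool.eq_false_iff.2 fun htbl => h _
            ((chompMove_iff a b c d _).2 (Or.inr (Or.inr (Or.inl ⟨t, ht, rfl⟩))))
            ((ih a t (min c t) (min d t) (by omega) h1a ha4 (by omega) (by omega)
              (by omega)).2 htbl)
        · exact Bool.eq_false_iff.2 fun htbl => h _
            ((chompMove_iff a b c d _).2 (Or.inr (Or.inr (Or.inr ⟨t, ht1, ht, rfl⟩))))
            ((ih t (min b t) (min c t) (min d t) (by omega) ht1 (by omega) (by omega)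
              (by omega) (by omega)).2 htbl)
      · rintro ⟨k1, k2, k3, k4⟩ s hm hPs
        rcases (chompMove_iff a b c d s).1 hm with
          ⟨t, ht, rfl⟩ | ⟨t, ht, rfl⟩ | ⟨t, ht, rfl⟩ | ⟨t, ht1, ht, rfl⟩
        · exact absurd ((ih a b c t (by omega) h1a ha4 hba hcb (by omega)).1 hPs)
            (by simp [k1 t ht])
        · exact absurd ((ih a b t (min d t) (by omega) h1a ha4 hba (by omega)
            (by omega)).1 hPs) (by simp [k2 t ht])
        · exact absurd ((ih a t (min c t) (min d t) (by omega) h1a ha4 (by omega)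
            (by omega) (by omega)).1 hPs) (by simp [k3 t ht])
        · exact absurd ((ih t (min b t) (min c t) (min d t) (by omega) ht1 (by omega)
            (by omega) (by omega) (by omega)).1 hPs) (by simp [k4 t ht ht1])
    rw [key]
    clear key ih hlt
    interval_cases a <;> interval_cases b <;> interval_cases c <;> interval_cases d <;>
      decide

end ChompAux

/-- Unique Extension for a ∈ {1,2,3,4}: for any triple (a,b,c) with
a ≤ 4, at most one d makes (a,b,c,d) a P-position. -/
theorem unique_extension_small (a b c d d' : ℕ) (ha : 1 ≤ a) (ha4 : a ≤ 4)
    (hba : b ≤ a) (hcb : c ≤ b) (hdc : d ≤ c) (hdc' : d' ≤ c)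
    (hP : ChompP ![a, b, c, d]) (hP' : ChompP ![a, b, c, d']) : d = d' := by
  have h1 := (ChompAux.tbl_correct 17 a b c d (by omega) ha ha4 hba hcb hdc).1 hP
  have h2 := (ChompAux.tbl_correct 17 a b c d' (by omega) ha ha4 hba hcb hdc').1 hP'
  have key : ∀ a ∈ List.range 5, ∀ b ∈ List.range 5, ∀ c ∈ List.range 5,
      ∀ d ∈ List.range 5, ∀ d' ∈ List.range 5,
      ChompAux.tbl a b c d = true → ChompAux.tbl a b c d' = true → d = d' := by decide
  exact key a (List.mem_range.2 (by omega)) b (List.mem_range.2 (by omega))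
    c (List.mem_range.2 (by omega)) d (List.mem_range.2 (by omega))
    d' (List.mem_range.2 (by omega)) h1 h2
end
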